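/- Fix p ∈ {1,…,7}, an ordered partition of {1,…,7}\{p} into an input triple (i₁,i₂,i₃) and an output triple (o₁,o₂,o₃), and an edge {a,b} ⊆ {1,…,7} with a ≠ b and p ∉ {a,b}. Then the row vector of input components of the edge vector is carried by the ansatz matrix to the row vector of output components: (e_{ab}(u_{i₁}^p), e_{ab}(u_{i₂}^p), e_{ab}(u_{i₃}^p)) · A^{(p)}[(i₁,i₂,i₃)→(o₁,o₂,o₃)] = (e_{ab}(u_{o₁}^p), e_{ab}(u_{o₂}^p), e_{ab}(u_{o₃}^p)). In other words, every edge vector restricts to a permitted coloring of every 5-simplex. -/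

import Mathlib

/-- The determinant `d_{ijk}` built from the columns `(α_i,β_i,γ_i)`, `(α_j,β_j,γ_j)`,
`(α_k,β_k,γ_k)`. -/
noncomputable def dd {F : Type*} [Field F] (al be ga : Fin 7 → F) (i j k : Fin 7) : F :=
  Matrix.det !![al i, al j, al k; be i, be j, be k; ga i, ga j, ga k]

/-- The ansatz matrix `A^{(p)}[(i₁,i₂,i₃)→(o₁,o₂,o₃)]`: its `(a,b)` entry is
`d_{j,o_b,p}·d_{k,o_b,p}/(d_{i_a,j,p}·d_{i_a,k,p})` where `{j,k}` are the two inputs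
other than `i_a` (chosen cyclically; the expression is symmetric in `j,k`). -/
noncomputable def ansatz {F : Type*} [Field F] (al be ga : Fin 7 → F) (p : Fin 7)
    (inp out : Fin 3 → Fin 7) : Matrix (Fin 3) (Fin 3) F := fun a b =>
  dd al be ga (inp (a + 1)) (out b) p * dd al be ga (inp (a + 2)) (out b) p /
    (dd al be ga (inp a) (inp (a + 1)) p * dd al be ga (inp a) (inp (a + 2)) p)

/-- The edge vector `e_{ab}` evaluated at a (5-element) subset `u ⊆ {1,…,7}`:
`d_{a,s,t}·d_{b,s,t}` if `a, b ∈ u`, where `{s,t}` is the complement of `u`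
(extracted as the sorted list of `uᶜ`), and `0` otherwise. -/
noncomputable def eVec {F : Type*} [Field F] (al be ga : Fin 7 → F) (a b : Fin 7)
    (u : Finset (Fin 7)) : F :=
  if a ∈ u ∧ b ∈ u then
    dd al be ga a ((uᶜ.sort (· ≤ ·)).getD 0 a) ((uᶜ.sort (· ≤ ·)).getD 1 a) *
      dd al be ga b ((uᶜ.sort (· ≤ ·)).getD 0 a) ((uᶜ.sort (· ≤ ·)).getD 1 a)
  else 0

/-- `u_q^p := {1,…,7} \ {p,q}`. -/
def uComp (p q : Fin 7) : Finset (Fin 7) := ({p, q} : Finset (Fin 7))ᶜ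

/-!
Fix `p`. Projecting the columns along the column of `p` onto a plane, `d_{x,y,p}` becomes the
2×2 determinant of the projected columns of `x` and `y`. Hence `w ↦ d_{w,a,p} d_{w,b,p}` is a
quadratic form on that plane, and `e_{ab}(u_q^p) = d_{q,a,p} d_{q,b,p}`. The entries of the
ansatz matrix are exactly the Lagrange interpolation coefficients of quadratic forms on the
plane with nodes `i₁, i₂, i₃` (nonzero denominators by genericity), so the claimed identity is
Lagrange interpolation. With denominators cleared it is a combination of Grassmann–Plücker
relations `d_{uvp} d_{stp} - d_{usp} d_{vtp} + d_{utp} d_{vsp} = 0`.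
-/

lemma List.nodup_of_toFinset_eq_univ {α : Type*} [Fintype α] [DecidableEq α] {l : List α}
    (h : l.toFinset = Finset.univ) (hl : l.length = Fintype.card α) : l.Nodup := by
  rw [← Multiset.coe_nodup, ← Multiset.toFinset_card_eq_card_iff_nodup]
  simpa [hl] using congrArg Finset.card h

lemma Finset.sort_pair_eq_or {α : Type*} [LinearOrder α] {p q : α} (h : p ≠ q) :
    ({p, q} : Finset α).sort (· ≤ ·) = [p, q] ∨ ({p, q} : Finset α).sort (· ≤ ·) = [q, p] := by
  have sort_of_lt : ∀ {x y : α}, x < y → ({x, y} : Finset α).sort (· ≤ ·) = [x, y] :=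
    fun hxy => by simp [Finset.sort_insert, hxy.le, hxy.ne]
  rcases h.lt_or_gt with hpq | hqp
  · exact .inl (sort_of_lt hpq)
  · exact .inr (Finset.pair_comm p q ▸ sort_of_lt hqp)

section Determinant

variable {F : Type*} [Field F] (al be ga : Fin 7 → F)

lemma dd_eq (i j k : Fin 7) :
    dd al be ga i j k = al i * (be j * ga k) - al i * (be k * ga j)
      - al j * (be i * ga k) + al j * (be k * ga i)
      + al k * (be i * ga j) - al k * (be j * ga i) := by
  simp only [dd, Matrix.det_fin_three, Matrix.of_apply, Matrix.cons_val', Matrix.cons_val_zero,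
    Matrix.cons_val_fin_one, Matrix.cons_val_one, Matrix.cons_val]
  ring

lemma dd_swap (i j k : Fin 7) : dd al be ga j i k = -dd al be ga i j k := by
  simp only [dd_eq]; ring

lemma dd_self (i k : Fin 7) : dd al be ga i i k = 0 := by
  simp only [dd_eq]; ring

lemma dd_plucker (p u v s t : Fin 7) :
    dd al be ga u v p * dd al be ga s t p - dd al be ga u s p * dd al be ga v t p
      + dd al be ga u t p * dd al be ga v s p = 0 := by
  simp only [dd_eq]; ring

lemma dd_lagrange (p x y z w a b : Fin 7) :
    dd al be ga x a p * dd al be ga x b p *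
        (dd al be ga y w p * dd al be ga z w p * dd al be ga y z p)
      - dd al be ga y a p * dd al be ga y b p *
        (dd al be ga x w p * dd al be ga z w p * dd al be ga x z p)
      + dd al be ga z a p * dd al be ga z b p *
        (dd al be ga x w p * dd al be ga y w p * dd al be ga x y p)
      - dd al be ga w a p * dd al be ga w b p *
        (dd al be ga x y p * dd al be ga x z p * dd al be ga y z p) = 0 := by
  linear_combination
    (dd al be ga x z p * dd al be ga y b p * dd al be ga z w p) * dd_plucker al be ga p x y w a
    - (dd al be ga x y p * dd al be ga y w p * dd al be ga z b p) * dd_plucker al be ga p x z w a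
    + (dd al be ga w a p * dd al be ga x y p * dd al be ga z w p) * dd_plucker al be ga p x y z b
    + (dd al be ga x z p * dd al be ga y w p * dd al be ga z w p) * dd_plucker al be ga p x y a b
    - (dd al be ga w a p * dd al be ga x y p * dd al be ga z b p) * dd_plucker al be ga p x y z w
    - (dd al be ga x y p * dd al be ga y w p * dd al be ga z w p) * dd_plucker al be ga p x z a b
    + (dd al be ga x b p * dd al be ga y w p * dd al be ga z w p) * dd_plucker al be ga p x y z a
    - (dd al be ga w a p * dd al be ga x y p * dd al be ga y z p) * dd_plucker al be ga p x z w b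

lemma sum_mul_ansatz (p : Fin 7) (inp out : Fin 3 → Fin 7)
    (h01 : dd al be ga (inp 0) (inp 1) p ≠ 0) (h02 : dd al be ga (inp 0) (inp 2) p ≠ 0)
    (h12 : dd al be ga (inp 1) (inp 2) p ≠ 0) (a b : Fin 7) (n : Fin 3) :
    ∑ i, dd al be ga (inp i) a p * dd al be ga (inp i) b p * ansatz al be ga p inp out i n =
      dd al be ga (out n) a p * dd al be ga (out n) b p := by
  simp only [Fin.sum_univ_three, ansatz, Fin.isValue, zero_add, Fin.reduceAdd]
  rw [dd_swap al be ga (inp 0) (inp 1), dd_swap al be ga (inp 0) (inp 2),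
    dd_swap al be ga (inp 1) (inp 2)]
  field_simp
  linear_combination dd_lagrange al be ga p (inp 0) (inp 1) (inp 2) (out n) a b

lemma eVec_uComp {a b p q : Fin 7} (hap : a ≠ p) (hbp : b ≠ p) (hqp : q ≠ p) :
    eVec al be ga a b (uComp p q) = dd al be ga q a p * dd al be ga q b p := by
  by_cases hq : q = a ∨ q = b
  · rw [eVec, if_neg (by simp [uComp]; tauto)]
    rcases hq with rfl | rfl <;> simp [dd_self]
  · rw [eVec, if_pos (by simp [uComp]; tauto), uComp, compl_compl]
    rcases Finset.sort_pair_eq_or hqp.symm with h | h <;>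
      simp only [h, List.getD_cons_zero, List.getD_cons_succ, dd_eq] <;> ring

end Determinant

theorem edgeVector_permitted_on_simplex_general {F : Type*} [Field F] (al be ga : Fin 7 → F)
    (hgen : ∀ i j k : Fin 7, i ≠ j → i ≠ k → j ≠ k → dd al be ga i j k ≠ 0)
    (p : Fin 7) (inp out : Fin 3 → Fin 7)
    (hpart : ({p, inp 0, inp 1, inp 2, out 0, out 1, out 2} : Finset (Fin 7)) =
      Finset.univ)
    (a b : Fin 7) (hap : a ≠ p) (hbp : b ≠ p) :
    Matrix.vecMul (fun n : Fin 3 => eVec al be ga a b (uComp p (inp n)))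
        (ansatz al be ga p inp out) =
      fun n : Fin 3 => eVec al be ga a b (uComp p (out n)) := by
  have hnodup : [p, inp 0, inp 1, inp 2, out 0, out 1, out 2].Nodup :=
    List.nodup_of_toFinset_eq_univ (by simpa using hpart) rfl
  simp only [List.nodup_cons, List.mem_cons, List.not_mem_nil, or_false, not_or] at hnodup
  obtain ⟨⟨hp0, hp1, hp2, hpo0, hpo1, hpo2⟩, ⟨h01, h02, -⟩, ⟨h12, -⟩, -⟩ := hnodup
  have hinp : ∀ i, inp i ≠ p := fun i => by
    fin_cases i; exacts [Ne.symm hp0, Ne.symm hp1, Ne.symm hp2]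
  have hout : ∀ n, out n ≠ p := fun n => by
    fin_cases n; exacts [Ne.symm hpo0, Ne.symm hpo1, Ne.symm hpo2]
  funext n
  simp only [Matrix.vecMul, dotProduct, eVec_uComp al be ga hap hbp (hinp _),
    eVec_uComp al be ga hap hbp (hout n)]
  exact sum_mul_ansatz al be ga p inp out (hgen _ _ _ h01 (hinp 0) (hinp 1))
    (hgen _ _ _ h02 (hinp 0) (hinp 2)) (hgen _ _ _ h12 (hinp 1) (hinp 2)) a b n

/-- Every edge vector restricts to a permitted coloring of every 5-simplex: the row of
its input components is carried by the ansatz matrix to the row of its output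
components. Here `(inp 0, inp 1, inp 2, out 0, out 1, out 2)` is an ordered partition
of `{1,…,7} \ {p}`. -/
theorem edgeVector_permitted_on_simplex {F : Type*} [Field F] (al be ga : Fin 7 → F)
    (hgen : ∀ i j k : Fin 7, i ≠ j → i ≠ k → j ≠ k → dd al be ga i j k ≠ 0)
    (p : Fin 7) (inp out : Fin 3 → Fin 7)
    (hpart : ({p, inp 0, inp 1, inp 2, out 0, out 1, out 2} : Finset (Fin 7)) =
      Finset.univ)
    (a b : Fin 7) (hab : a ≠ b) (hap : a ≠ p) (hbp : b ≠ p) :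
    Matrix.vecMul (fun n : Fin 3 => eVec al be ga a b (uComp p (inp n)))
        (ansatz al be ga p inp out) =
      fun n : Fin 3 => eVec al be ga a b (uComp p (out n)) :=
  edgeVector_permitted_on_simplex_general al be ga hgen p inp out hpart a b hap hbp
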